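/- arXiv:0707.3708 — 5 statements merged into one kernel-verified Lean document; each statement's English description precedes it below -/
import Mathlib

section
/- Let G ⊆ ℝⁿ be open and convex, let η : G → ℝ be differentiable and strictly convex, let L : G → Matₙ(ℝ) assign to each U a symmetric positive semidefinite matrix whose kernel is a fixed subspace N ⊆ ℝⁿ independent of U, and set Q(U) = −L(U)·∇η(U). Then for every U ∈ G there is at most one point M ∈ G such that Q(M) = 0 and U − M lies in the orthogonal complement N^⊥ of N. -/
/-!
If `Q(M) = 0` then `∇η(M) ∈ ker L(M) = N`. For two such points `M₁ ≠ M₂` with `U - Mᵢ ⊥ N`, the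
direction `M₂ - M₁ = (U - M₁) - (U - M₂)` is orthogonal to `N`, so the derivatives of `η` at `M₁`
and at `M₂` in this direction both vanish. This contradicts strict convexity, which makes the
derivative of `η` along the line through `M₁` and `M₂` strictly increasing.
-/

open Matrix

/-- The gradient (as a column vector) of a function on `ℝⁿ`. -/
noncomputable def grad {n : ℕ} (η : (Fin n → ℝ) → ℝ) (U : Fin n → ℝ) : Fin n → ℝ :=
  fun i => fderiv ℝ η U (Pi.single i 1)

theorem grad_dotProduct {n : ℕ} (η : (Fin n → ℝ) → ℝ) (x v : Fin n → ℝ) :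
    grad η x ⬝ᵥ v = fderiv ℝ η x v := by
  conv_rhs => rw [pi_eq_sum_univ' v]
  simp [grad, dotProduct, mul_comm]

theorem StrictConvexOn.comp_affineMap_of_injective {𝕜 E F β : Type*} [Field 𝕜] [LinearOrder 𝕜]
    [AddCommGroup E] [AddCommGroup F] [AddCommMonoid β] [PartialOrder β]
    [Module 𝕜 E] [Module 𝕜 F] [SMul 𝕜 β] {f : F → β} {s : Set F}
    (hf : StrictConvexOn 𝕜 s f) (g : E →ᵃ[𝕜] F) (hg : Function.Injective g) :
    StrictConvexOn 𝕜 (g ⁻¹' s) (f ∘ g) :=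
  ⟨hf.1.affine_preimage _, fun x hx y hy hxy a b ha hb hab =>
    calc
      (f ∘ g) (a • x + b • y) = f (a • g x + b • g y) := by
        rw [Function.comp_apply, Convex.combo_affine_apply hab]
      _ < a • f (g x) + b • f (g y) := hf.2 hx hy (hg.ne hxy) ha hb hab⟩

theorem StrictConvexOn.fderiv_apply_sub_lt {E : Type*} [NormedAddCommGroup E] [NormedSpace ℝ E]
    {s : Set E} {f : E → ℝ} (hf : StrictConvexOn ℝ s f) {x y : E} (hx : x ∈ s) (hy : y ∈ s)
    (hxy : x ≠ y) (hfx : DifferentiableAt ℝ f x) (hfy : DifferentiableAt ℝ f y) :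
    fderiv ℝ f x (y - x) < fderiv ℝ f y (y - x) := by
  set ℓ := AffineMap.lineMap (k := ℝ) x y
  have hg := hf.comp_affineMap_of_injective ℓ (AffineMap.lineMap_injective ℝ hxy)
  have h0 : ℓ 0 = x := AffineMap.lineMap_apply_zero x y
  have h1 : ℓ 1 = y := AffineMap.lineMap_apply_one x y
  have hs0 : (0 : ℝ) ∈ ℓ ⁻¹' s := by rwa [Set.mem_preimage, h0]
  have hs1 : (1 : ℝ) ∈ ℓ ⁻¹' s := by rwa [Set.mem_preimage, h1]
  have hderiv : ∀ t, DifferentiableAt ℝ f (ℓ t) →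
      HasDerivAt (f ∘ ℓ) (fderiv ℝ f (ℓ t) (y - x)) t := fun t hft =>
    hft.hasFDerivAt.comp_hasDerivAt t AffineMap.hasDerivAt_lineMap
  calc fderiv ℝ f x (y - x)
      < slope (f ∘ ℓ) 0 1 :=
        hg.lt_slope_of_hasDerivAt hs0 hs1 one_pos (h0 ▸ hderiv 0 (h0 ▸ hfx))
    _ < fderiv ℝ f y (y - x) :=
        hg.slope_lt_of_hasDerivAt hs0 hs1 one_pos (h1 ▸ hderiv 1 (h1 ▸ hfy))

theorem stmt2_general {n : ℕ} (G : Set (Fin n → ℝ))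
    (η : (Fin n → ℝ) → ℝ) (hηd : ∀ U ∈ G, DifferentiableAt ℝ η U)
    (hηc : StrictConvexOn ℝ G η)
    (L : (Fin n → ℝ) → Matrix (Fin n) (Fin n) ℝ)
    (N : Submodule ℝ (Fin n → ℝ))
    (hker : ∀ U ∈ G, LinearMap.ker (Matrix.toLin' (L U)) = N)
    (Q : (Fin n → ℝ) → (Fin n → ℝ))
    (hQ : ∀ U ∈ G, Q U = -(L U).mulVec (grad η U)) :
    ∀ U ∈ G, ∀ M₁ ∈ G, ∀ M₂ ∈ G,
      Q M₁ = 0 → (∀ y ∈ N, (U - M₁) ⬝ᵥ y = 0) →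
      Q M₂ = 0 → (∀ y ∈ N, (U - M₂) ⬝ᵥ y = 0) →
      M₁ = M₂ := by
  intro U _ M₁ hM₁ M₂ hM₂ hQ₁ hU₁ hQ₂ hU₂
  have grad_mem : ∀ M ∈ G, Q M = 0 → grad η M ∈ N := fun M hM hQM => by
    rw [← hker M hM, LinearMap.mem_ker, toLin'_apply, ← neg_eq_zero, ← hQ M hM, hQM]
  have orthogonal : ∀ y ∈ N, y ⬝ᵥ (M₂ - M₁) = 0 := fun y hy => by
    rw [dotProduct_comm, ← sub_sub_sub_cancel_left M₁ M₂ U, sub_dotProduct, hU₁ y hy, hU₂ y hy,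
      sub_self]
  by_contra hne
  have hlt := hηc.fderiv_apply_sub_lt hM₁ hM₂ hne (hηd M₁ hM₁) (hηd M₂ hM₂)
  rw [← grad_dotProduct, ← grad_dotProduct, orthogonal _ (grad_mem M₁ hM₁ hQ₁),
    orthogonal _ (grad_mem M₂ hM₂ hQ₂)] at hlt
  exact lt_irrefl 0 hlt

/-- Uniqueness part of Theorem 2.3: for each `U ∈ G` there is at most one
equilibrium point `M` with `U - M` orthogonal (w.r.t. the Euclidean inner
product) to the common null space `N` of the matrices `L(U)`. -/
theorem stmt2 {n : ℕ} (G : Set (Fin n → ℝ)) (hGo : IsOpen G) (hGc : Convex ℝ G)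
    (η : (Fin n → ℝ) → ℝ) (hηd : ∀ U ∈ G, DifferentiableAt ℝ η U)
    (hηc : StrictConvexOn ℝ G η)
    (L : (Fin n → ℝ) → Matrix (Fin n) (Fin n) ℝ)
    (hL : ∀ U ∈ G, (L U).PosSemidef)
    (N : Submodule ℝ (Fin n → ℝ))
    (hker : ∀ U ∈ G, LinearMap.ker (Matrix.toLin' (L U)) = N)
    (Q : (Fin n → ℝ) → (Fin n → ℝ))
    (hQ : ∀ U ∈ G, Q U = -(L U).mulVec (grad η U)) :
    ∀ U ∈ G, ∀ M₁ ∈ G, ∀ M₂ ∈ G,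
      Q M₁ = 0 → (∀ y ∈ N, (U - M₁) ⬝ᵥ y = 0) →
      Q M₂ = 0 → (∀ y ∈ N, (U - M₂) ⬝ᵥ y = 0) →
      M₁ = M₂ :=
  stmt2_general G η hηd hηc L N hker Q hQ
end

section
/- Let G ⊆ ℝⁿ be open and convex, let η : G → ℝ be twice continuously differentiable with positive-definite Hessian, let L : G → Matₙ(ℝ) assign to each U a symmetric positive semidefinite matrix whose kernel is a fixed subspace N ⊆ ℝⁿ, and set Q(U) = −L(U)·∇η(U). Let D ⊆ G and let M : D → G satisfy Q(M(U)) = 0 and U − M(U) ∈ N^⊥ for all U ∈ D. Then there exist functions c, C : D → ℝ with 0 < c(U) ≤ C(U) for every U ∈ D such that c(U)·‖U − M(U)‖ ≤ ‖Q(U)‖ ≤ C(U)·‖U − M(U)‖ for every U ∈ D; in particular, Q(U) = 0 if and only if U = M(U). -/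
/-! The gradient of a strictly convex `C²` function is strictly monotone: restricting `∇η` to the
segment from `M(U)` to `U` and applying the mean value theorem gives
`(U - M(U)) ⬝ᵥ (∇η(U) - ∇η(M(U))) > 0` whenever `U ≠ M(U)`. If `Q(U) = 0`, both gradients lie in
`ker L = N`, so this dot product vanishes because `U - M(U) ⊥ N`; hence `Q(U) = 0 ↔ U = M(U)`, and
the two-sided bound holds with `c(U) = C(U) = ‖Q(U)‖ / ‖U - M(U)‖` (and `1` when `U = M(U)`). -/

open Matrix

/-- The Hessian matrix of a function on `ℝⁿ`. -/
noncomputable def hess {n : ℕ} (η : (Fin n → ℝ) → ℝ) (U : Fin n → ℝ) :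
    Matrix (Fin n) (Fin n) ℝ :=
  Matrix.of fun i j => fderiv ℝ (fun V => fderiv ℝ η V (Pi.single j 1)) U (Pi.single i 1)

/-- The Euclidean norm on `ℝⁿ`. -/
noncomputable def euclNorm {n : ℕ} (x : Fin n → ℝ) : ℝ :=
  Real.sqrt (∑ i, x i ^ 2)

lemma euclNorm_nonneg {n : ℕ} (x : Fin n → ℝ) : 0 ≤ euclNorm x :=
  Real.sqrt_nonneg _

lemma euclNorm_eq_zero {n : ℕ} {x : Fin n → ℝ} : euclNorm x = 0 ↔ x = 0 := by
  rw [euclNorm, Real.sqrt_eq_zero (Finset.sum_nonneg fun i _ => sq_nonneg (x i)),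
    Finset.sum_eq_zero_iff_of_nonneg fun i _ => sq_nonneg (x i), funext_iff]
  simp

@[simp]
lemma euclNorm_zero {n : ℕ} : euclNorm (0 : Fin n → ℝ) = 0 :=
  euclNorm_eq_zero.2 rfl

lemma euclNorm_pos {n : ℕ} {x : Fin n → ℝ} (hx : x ≠ 0) : 0 < euclNorm x :=
  (euclNorm_nonneg x).lt_of_ne' (euclNorm_eq_zero.not.2 hx)

lemma exists_pos_mul_euclNorm_eq {X : Type*} {m n : ℕ} (D : Set X) (f : X → Fin m → ℝ)
    (g : X → Fin n → ℝ) (hfg : ∀ x ∈ D, f x = 0 ↔ g x = 0) :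
    ∃ c : X → ℝ, ∀ x ∈ D, 0 < c x ∧ c x * euclNorm (g x) = euclNorm (f x) := by
  classical
  refine ⟨fun x => if g x = 0 then 1 else euclNorm (f x) / euclNorm (g x), fun x hx => ?_⟩
  by_cases hg : g x = 0
  · simp [hg, (hfg x hx).2 hg]
  · have hf : f x ≠ 0 := (hfg x hx).not.2 hg
    simp only [if_neg hg]
    exact ⟨div_pos (euclNorm_pos hf) (euclNorm_pos hg),
      div_mul_cancel₀ _ (euclNorm_pos hg).ne'⟩

lemma ContinuousLinearMap.apply_eq_sum_mul_single {ι : Type*} [Fintype ι] [DecidableEq ι]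
    (f : (ι → ℝ) →L[ℝ] ℝ) (v : ι → ℝ) : f v = ∑ i, v i * f (Pi.single i 1) := by
  conv_lhs => rw [pi_eq_sum_univ' v, map_sum]
  simp

lemma fderiv_apply_eq_dotProduct_grad {n : ℕ} (η : (Fin n → ℝ) → ℝ) (x v : Fin n → ℝ) :
    fderiv ℝ η x v = v ⬝ᵥ grad η x :=
  (fderiv ℝ η x).apply_eq_sum_mul_single v

lemma ContinuousLinearMap.apply_apply_eq_dotProduct_mulVec {ι : Type*} [Fintype ι]
    [DecidableEq ι] (B : (ι → ℝ) →L[ℝ] (ι → ℝ) →L[ℝ] ℝ) (v w : ι → ℝ) :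
    B v w = v ⬝ᵥ (Matrix.of fun i j => B (Pi.single i 1) (Pi.single j 1)) *ᵥ w := by
  have hB : ∀ j, B v (Pi.single j 1) = ∑ i, v i * B (Pi.single i 1) (Pi.single j 1) := fun j =>
    ((ContinuousLinearMap.apply ℝ ℝ (Pi.single j 1)).comp B).apply_eq_sum_mul_single v
  rw [(B v).apply_eq_sum_mul_single w, dotProduct_mulVec]
  simp only [hB, dotProduct, vecMul, of_apply, Finset.mul_sum, Finset.sum_mul]
  exact Finset.sum_congr rfl fun j _ => Finset.sum_congr rfl fun i _ => by ring

lemma hess_eq_of_differentiableAt {n : ℕ} {η : (Fin n → ℝ) → ℝ} {x : Fin n → ℝ}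
    (hd : DifferentiableAt ℝ (fderiv ℝ η) x) :
    hess η x = Matrix.of fun i j => fderiv ℝ (fderiv ℝ η) x (Pi.single i 1) (Pi.single j 1) := by
  ext i j
  simp [hess, fderiv_clm_apply hd (differentiableAt_const _)]

lemma hasDerivAt_fderiv_apply_add_smul {n : ℕ} {η : (Fin n → ℝ) → ℝ} {a v : Fin n → ℝ} {t : ℝ}
    (hd : DifferentiableAt ℝ (fderiv ℝ η) (a + t • v)) :
    HasDerivAt (fun s : ℝ => fderiv ℝ η (a + s • v) v)
      (v ⬝ᵥ hess η (a + t • v) *ᵥ v) t := by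
  have hline : HasDerivAt (fun s : ℝ => a + s • v) v t := by
    simpa using ((hasDerivAt_id t).smul_const v).const_add a
  rw [hess_eq_of_differentiableAt hd,
    ← ContinuousLinearMap.apply_apply_eq_dotProduct_mulVec]
  exact (ContinuousLinearMap.apply ℝ ℝ v).hasFDerivAt.comp_hasDerivAt t
    (hd.hasFDerivAt.comp_hasDerivAt t hline)

theorem dotProduct_grad_sub_grad_pos {n : ℕ} {G : Set (Fin n → ℝ)} (hGo : IsOpen G)
    (hGc : Convex ℝ G) {η : (Fin n → ℝ) → ℝ} (hη : ContDiffOn ℝ 2 η G)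
    (hηpos : ∀ U ∈ G, (hess η U).PosDef) {a b : Fin n → ℝ} (ha : a ∈ G) (hb : b ∈ G)
    (hab : a ≠ b) : 0 < (b - a) ⬝ᵥ (grad η b - grad η a) := by
  set v := b - a
  have hv : v ≠ 0 := sub_ne_zero.2 hab.symm
  have hseg : ∀ t ∈ Set.Icc (0 : ℝ) 1, a + t • v ∈ G := fun t ht => hGc.add_smul_sub_mem ha hb ht
  have hd : ∀ x ∈ G, DifferentiableAt ℝ (fderiv ℝ η) x := fun x hx =>
    ((hη.contDiffAt (hGo.mem_nhds hx)).fderiv_right (m := 1) le_rfl).differentiableAt one_ne_zero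
  have hderiv : ∀ t ∈ Set.Icc (0 : ℝ) 1, HasDerivAt (fun s : ℝ => fderiv ℝ η (a + s • v) v)
      (v ⬝ᵥ hess η (a + t • v) *ᵥ v) t := fun t ht =>
    hasDerivAt_fderiv_apply_add_smul (hd _ (hseg t ht))
  obtain ⟨t, ht, hslope⟩ := exists_hasDerivAt_eq_slope _ _ zero_lt_one
    (fun t ht => (hderiv t ht).continuousAt.continuousWithinAt)
    (fun t ht => hderiv t (Set.Ioo_subset_Icc_self ht))
  have hpos := (hηpos _ (hseg t (Set.Ioo_subset_Icc_self ht))).dotProduct_mulVec_pos hv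
  rw [star_trivial, hslope] at hpos
  simpa [fderiv_apply_eq_dotProduct_grad, hb, dotProduct_sub, v] using hpos

theorem stmt3_general {n : ℕ} (G : Set (Fin n → ℝ)) (hGo : IsOpen G) (hGc : Convex ℝ G)
    (η : (Fin n → ℝ) → ℝ) (hη : ContDiffOn ℝ 2 η G)
    (hηpos : ∀ U ∈ G, (hess η U).PosDef)
    (L : (Fin n → ℝ) → Matrix (Fin n) (Fin n) ℝ)
    (N : Submodule ℝ (Fin n → ℝ))
    (hker : ∀ U ∈ G, LinearMap.ker (Matrix.toLin' (L U)) = N)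
    (Q : (Fin n → ℝ) → (Fin n → ℝ))
    (hQ : ∀ U ∈ G, Q U = -(L U).mulVec (grad η U))
    (D : Set (Fin n → ℝ)) (hD : D ⊆ G)
    (M : (Fin n → ℝ) → (Fin n → ℝ))
    (hMmem : ∀ U ∈ D, M U ∈ G)
    (hMeq : ∀ U ∈ D, Q (M U) = 0)
    (hMperp : ∀ U ∈ D, ∀ y ∈ N, (U - M U) ⬝ᵥ y = 0) :
    ∃ c C : (Fin n → ℝ) → ℝ,
      (∀ U ∈ D, 0 < c U ∧ c U ≤ C U) ∧
      (∀ U ∈ D, c U * euclNorm (U - M U) ≤ euclNorm (Q U) ∧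
        euclNorm (Q U) ≤ C U * euclNorm (U - M U)) ∧
      (∀ U ∈ D, Q U = 0 ↔ U = M U) := by
  have hgrad_mem : ∀ U ∈ G, Q U = 0 → grad η U ∈ N := fun U hU hQU => by
    rw [← hker U hU, LinearMap.mem_ker, Matrix.toLin'_apply, ← neg_eq_zero, ← hQ U hU, hQU]
  have hQ_eq_zero : ∀ U ∈ D, Q U = 0 ↔ U = M U := fun U hU => by
    refine ⟨fun hQU => ?_, fun h => h ▸ hMeq U hU⟩
    by_contra hne
    have hpos := dotProduct_grad_sub_grad_pos hGo hGc hη hηpos (hMmem U hU) (hD hU) (Ne.symm hne)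
    rw [hMperp U hU _ (N.sub_mem (hgrad_mem U (hD hU) hQU)
      (hgrad_mem _ (hMmem U hU) (hMeq U hU)))] at hpos
    exact hpos.false
  obtain ⟨c, hc⟩ := exists_pos_mul_euclNorm_eq D Q (fun U => U - M U)
    fun U hU => (hQ_eq_zero U hU).trans sub_eq_zero.symm
  exact ⟨c, c, fun U hU => ⟨(hc U hU).1, le_rfl⟩,
    fun U hU => ⟨(hc U hU).2.le, (hc U hU).2.ge⟩, hQ_eq_zero⟩

/-- The two-sided bound (2.4) of Theorem 2.3:
`c(U)‖U - M(U)‖ ≤ ‖Q(U)‖ ≤ C(U)‖U - M(U)‖`; in particular `Q(U) = 0 ↔ U = M(U)`. -/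
theorem stmt3 {n : ℕ} (G : Set (Fin n → ℝ)) (hGo : IsOpen G) (hGc : Convex ℝ G)
    (η : (Fin n → ℝ) → ℝ) (hη : ContDiffOn ℝ 2 η G)
    (hηpos : ∀ U ∈ G, (hess η U).PosDef)
    (L : (Fin n → ℝ) → Matrix (Fin n) (Fin n) ℝ)
    (hL : ∀ U ∈ G, (L U).PosSemidef)
    (N : Submodule ℝ (Fin n → ℝ))
    (hker : ∀ U ∈ G, LinearMap.ker (Matrix.toLin' (L U)) = N)
    (Q : (Fin n → ℝ) → (Fin n → ℝ))
    (hQ : ∀ U ∈ G, Q U = -(L U).mulVec (grad η U))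
    (D : Set (Fin n → ℝ)) (hD : D ⊆ G)
    (M : (Fin n → ℝ) → (Fin n → ℝ))
    (hMmem : ∀ U ∈ D, M U ∈ G)
    (hMeq : ∀ U ∈ D, Q (M U) = 0)
    (hMperp : ∀ U ∈ D, ∀ y ∈ N, (U - M U) ⬝ᵥ y = 0) :
    ∃ c C : (Fin n → ℝ) → ℝ,
      (∀ U ∈ D, 0 < c U ∧ c U ≤ C U) ∧
      (∀ U ∈ D, c U * euclNorm (U - M U) ≤ euclNorm (Q U) ∧
        euclNorm (Q U) ≤ C U * euclNorm (U - M U)) ∧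
      (∀ U ∈ D, Q U = 0 ↔ U = M U) :=
  stmt3_general G hGo hGc η hη hηpos L N hker Q hQ D hD M hMmem hMeq hMperp
end

section
/- Let G ⊆ ℝⁿ be open, let η : G → ℝ be twice continuously differentiable with positive-definite Hessian, let L : G → Matₙ(ℝ) be continuous with each L(U) symmetric positive semidefinite and with kernel a fixed subspace N independent of U, and set Q(U) = −L(U)·∇η(U). Then at every point U_e ∈ G with Q(U_e) = 0: (a) Q is differentiable at U_e with Jacobian DQ(U_e) = −L(U_e)·Hess η(U_e); (b) consequently the matrix DQ(U_e)·(Hess η(U_e))⁻¹ = −L(U_e) is symmetric and negative semidefinite, and its null space coincides with N, the null space of L(U_e). -/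
/-!
Because `Q(U_e) = 0`, the vector `∇η(U_e)` lies in the common kernel of all `L(U)`, so near `U_e`
we may write `Q(U) = -L(U) (∇η(U) - ∇η(U_e))`. The second factor is differentiable and vanishes
at `U_e`, so the merely continuous first factor can be frozen at `U_e` when differentiating,
giving `DQ(U_e) = -L(U_e) Hess η(U_e)`.
-/

open Matrix Filter Topology Asymptotics

theorem HasFDerivAt.clm_apply_of_continuousAt_of_eq_zero {𝕜 E F G : Type*}
    [NontriviallyNormedField 𝕜] [NormedAddCommGroup E] [NormedSpace 𝕜 E]
    [NormedAddCommGroup F] [NormedSpace 𝕜 F] [NormedAddCommGroup G] [NormedSpace 𝕜 G]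
    {c : E → F →L[𝕜] G} {u : E → F} {u' : E →L[𝕜] F} {x : E}
    (hu : HasFDerivAt u u' x) (hc : ContinuousAt c x) (hux : u x = 0) :
    HasFDerivAt (fun y => c y (u y)) ((c x).comp u') x := by
  refine .of_isLittleO ?_
  have hsplit : (fun y => c y (u y) - c x (u x) - (c x).comp u' (y - x)) =
      fun y => (c y - c x) (u y) + c x (u y - u x - u' (y - x)) := by
    ext y
    simp only [hux, map_zero, sub_zero, _root_.sub_apply, map_sub, ContinuousLinearMap.comp_apply]
    abel
  have hc_small : (fun y => ‖c y - c x‖) =o[𝓝 x] fun _ => (1 : ℝ) :=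
    (isLittleO_one_iff ℝ).mpr (tendsto_iff_norm_sub_tendsto_zero.mp hc)
  have hu_lin : (fun y => ‖u y‖) =O[𝓝 x] fun y => ‖y - x‖ := by
    simpa [hux] using hu.isBigO_sub.norm_norm
  have h_jump : (fun y => (c y - c x) (u y)) =o[𝓝 x] fun y => y - x := by
    refine isBoundedBilinearMap_apply.isBigO_comp.trans_isLittleO ?_
    simpa using (hc_small.mul_isBigO hu_lin).norm_right
  rw [hsplit]
  exact h_jump.add (((c x).isBigO_comp _ _).trans_isLittleO hu.isLittleO)

theorem Matrix.continuous_toContinuousLinearMap_mulVecLin {m n 𝕜 : Type*} [Fintype m]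
    [Fintype n] [DecidableEq n] [NontriviallyNormedField 𝕜] [CompleteSpace 𝕜] :
    Continuous fun M : Matrix m n 𝕜 => LinearMap.toContinuousLinearMap M.mulVecLin :=
  (LinearMap.toContinuousLinearMap.toLinearMap ∘ₗ
    (Matrix.toLin' : Matrix m n 𝕜 ≃ₗ[𝕜] _).toLinearMap).continuous_of_finiteDimensional

theorem Matrix.hasFDerivAt_mulVec_sub_self {m n p 𝕜 : Type*} [Fintype m] [Fintype n]
    [DecidableEq n] [Fintype p] [NontriviallyNormedField 𝕜] [CompleteSpace 𝕜]
    {M : (p → 𝕜) → Matrix m n 𝕜} {g : (p → 𝕜) → n → 𝕜} {A : Matrix n p 𝕜} {x : p → 𝕜}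
    (hM : ContinuousAt M x) (hg : HasFDerivAt g (LinearMap.toContinuousLinearMap A.mulVecLin) x) :
    HasFDerivAt (fun y => M y *ᵥ (g y - g x))
      (LinearMap.toContinuousLinearMap (M x * A).mulVecLin) x := by
  have hcomp : (LinearMap.toContinuousLinearMap (M x).mulVecLin).comp
      (LinearMap.toContinuousLinearMap A.mulVecLin) =
      LinearMap.toContinuousLinearMap (M x * A).mulVecLin := by
    ext v : 1
    simp [Matrix.mulVec_mulVec]
  rw [← hcomp]
  exact (hg.sub_const (g x)).clm_apply_of_continuousAt_of_eq_zero
    (continuous_toContinuousLinearMap_mulVecLin.continuousAt.comp hM) (sub_self _)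

theorem hasFDerivAt_grad {n : ℕ} {η : (Fin n → ℝ) → ℝ} {U : Fin n → ℝ}
    (hη : ContDiffAt ℝ 2 η U) :
    HasFDerivAt (grad η) (LinearMap.toContinuousLinearMap (hess η U).mulVecLin) U := by
  set B := fderiv ℝ (fderiv ℝ η) U
  have hB : HasFDerivAt (fderiv ℝ η) B U :=
    ((hη.fderiv_right le_rfl).differentiableAt one_ne_zero).hasFDerivAt
  have hsymm : IsSymmSndFDerivAt ℝ η U :=
    hη.isSymmSndFDerivAt (by simp [minSmoothness_of_isRCLikeNormedField])
  have hpartial : ∀ i : Fin n, HasFDerivAt (fun V => fderiv ℝ η V (Pi.single i 1))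
      ((ContinuousLinearMap.apply ℝ ℝ (Pi.single i 1)).comp B) U := fun i =>
    ((ContinuousLinearMap.apply ℝ ℝ (Pi.single i 1)).hasFDerivAt.comp U hB :)
  -- `hess` differentiates in the opposite order to the Jacobian of `grad`; symmetry reconciles them
  have hhess : hess η U = LinearMap.toMatrix'
      (ContinuousLinearMap.pi fun i => (ContinuousLinearMap.apply ℝ ℝ (Pi.single i 1)).comp B :
        (Fin n → ℝ) →L[ℝ] (Fin n → ℝ)).toLinearMap := by
    ext i j
    simpa [hess, (hpartial j).fderiv, LinearMap.toMatrix'_apply] using hsymm _ _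
  rw [hhess, ← Matrix.toLin'_apply', Matrix.toLin'_toMatrix']
  exact hasFDerivAt_pi.mpr hpartial

/-- Conclusion (4) of Theorem 2.4: at an equilibrium `U_e` (i.e. `Q(U_e) = 0`),
`Q` is differentiable with Jacobian `DQ(U_e) = -L(U_e)·Hess η(U_e)`; hence
`DQ(U_e)·(Hess η(U_e))⁻¹ = -L(U_e)` is symmetric, negative semidefinite, and
its null space coincides with `N`, the null space of `L(U_e)`. -/
theorem stmt7 {n : ℕ} (G : Set (Fin n → ℝ)) (hG : IsOpen G)
    (η : (Fin n → ℝ) → ℝ) (hη : ContDiffOn ℝ 2 η G)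
    (hηpos : ∀ U ∈ G, (hess η U).PosDef)
    (L : (Fin n → ℝ) → Matrix (Fin n) (Fin n) ℝ)
    (hLc : ContinuousOn L G)
    (hL : ∀ U ∈ G, (L U).PosSemidef)
    (N : Submodule ℝ (Fin n → ℝ))
    (hker : ∀ U ∈ G, LinearMap.ker (Matrix.toLin' (L U)) = N)
    (Q : (Fin n → ℝ) → (Fin n → ℝ))
    (hQ : ∀ U ∈ G, Q U = -(L U).mulVec (grad η U)) :
    ∀ Ue ∈ G, Q Ue = 0 →
      HasFDerivAt Q (LinearMap.toContinuousLinearMap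
        (Matrix.mulVecLin (-(L Ue * hess η Ue)))) Ue ∧
      (-(L Ue * hess η Ue)) * (hess η Ue)⁻¹ = -(L Ue) ∧
      (-(L Ue)).IsSymm ∧
      (∀ x : Fin n → ℝ, x ⬝ᵥ (-(L Ue)).mulVec x ≤ 0) ∧
      LinearMap.ker (Matrix.toLin' (-(L Ue))) = N := by
  intro Ue hUe hQe
  have hG_nhds : G ∈ 𝓝 Ue := hG.mem_nhds hUe
  have hLe := hL Ue hUe
  refine ⟨?_, ?_, (isHermitian_iff_isSymm.mp hLe.isHermitian).neg, fun x => ?_, ?_⟩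
  · have hgrad_mem : grad η Ue ∈ N := by
      rw [← hker Ue hUe, LinearMap.mem_ker, Matrix.toLin'_apply, ← neg_eq_zero, ← hQ Ue hUe, hQe]
    have hQ_near : Q =ᶠ[𝓝 Ue] fun U => (-L U) *ᵥ (grad η U - grad η Ue) := by
      filter_upwards [hG_nhds] with U hU
      have hker_U : L U *ᵥ grad η Ue = 0 := by
        rwa [← hker U hU, LinearMap.mem_ker, Matrix.toLin'_apply] at hgrad_mem
      simp [hQ U hU, Matrix.mulVec_sub, Matrix.neg_mulVec, hker_U]
    have hderiv := hasFDerivAt_mulVec_sub_self (hLc.continuousAt hG_nhds).neg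
      (hasFDerivAt_grad (hη.contDiffAt hG_nhds))
    rw [Pi.neg_apply, neg_mul] at hderiv
    exact hderiv.congr_of_eventuallyEq hQ_near
  · rw [neg_mul, Matrix.mul_assoc,
      Matrix.mul_nonsing_inv _ (hηpos Ue hUe).det_pos.ne'.isUnit, Matrix.mul_one]
  · simpa [Matrix.neg_mulVec] using hLe.dotProduct_mulVec_nonneg x
  · rw [map_neg, LinearMap.ker_neg, hker Ue hUe]
end

section
/- Let L ≥ 1 be an integer and let ρ > 0, C > 0, and σ₁, …, σ_L > 0 be real numbers. Define the (L+5)×(L+5) real matrix ℒ by: ℒ is zero in all entries involving one of the first four indices; ℒ_{5,5} = ρ·C·Σ_{l=1}^L σ_l; ℒ_{5,5+l} = ℒ_{5+l,5} = −ρ·σ_l for 1 ≤ l ≤ L; ℒ_{5+l,5+l} = ρ·C⁻¹·σ_l for 1 ≤ l ≤ L; and all other entries zero. Then ℒ is symmetric, positive semidefinite (indeed yᵀℒy = ρ·C⁻¹·Σ_{l=1}^L σ_l·(C·y₅ − y_{5+l})² for all y ∈ ℝ^{L+5}), and its kernel equals span{e₁, e₂, e₃, e₄, e₅ + C·Σ_{l=1}^L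 e_{5+l}}, where e_k is the k-th standard basis vector of ℝ^{L+5}; in particular the kernel does not depend on ρ, on the σ_l, or on C (given C fixed) beyond the fixed constant C. -/
open Matrix

/-!
The matrix is a positive combination of rank-one matrices,
`ℒ = Σ_l ρ C⁻¹ σ_l v_l v_lᵀ` with `v_l = C e₅ - e_{5+l}`. Symmetry, positive semidefiniteness and
the quadratic form `Σ_l ρ C⁻¹ σ_l (v_l ⬝ y)²` follow at once, and since a positive semidefinite
matrix kills exactly the vectors on which its quadratic form vanishes, the kernel is
`{y | C y₅ = y_{5+l} for all l}`, which is the stated span.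
-/

namespace Matrix

section CommSemiring

variable {ι κ R : Type*} [Fintype κ] [CommSemiring R] (w : κ → R) (v : κ → ι → R)

theorem isSymm_sum_smul_vecMulVec_self : (∑ k, w k • vecMulVec (v k) (v k)).IsSymm := by
  simp [IsSymm, transpose_sum, transpose_smul, transpose_vecMulVec]

theorem dotProduct_sum_smul_vecMulVec_self_mulVec [Fintype ι] (y : ι → R) :
    y ⬝ᵥ (∑ k, w k • vecMulVec (v k) (v k)) *ᵥ y = ∑ k, w k * (v k ⬝ᵥ y) ^ 2 := by
  simp only [sum_mulVec, smul_mulVec, vecMulVec_mulVec, op_smul_eq_smul, dotProduct_comm y,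
    sum_dotProduct, smul_dotProduct, smul_eq_mul]
  exact Finset.sum_congr rfl fun k _ => by ring

end CommSemiring

variable {ι κ : Type*} [Fintype ι] [Fintype κ] (w : κ → ℝ) (v : κ → ι → ℝ)

theorem posSemidef_sum_smul_vecMulVec_self (hw : ∀ k, 0 ≤ w k) :
    (∑ k, w k • vecMulVec (v k) (v k)).PosSemidef :=
  posSemidef_sum _ fun k _ => (posSemidef_vecMulVec_self_star (v k)).smul (hw k)

theorem sum_smul_vecMulVec_self_mulVec_eq_zero_iff (hw : ∀ k, 0 < w k) (y : ι → ℝ) :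
    (∑ k, w k • vecMulVec (v k) (v k)) *ᵥ y = 0 ↔ ∀ k, v k ⬝ᵥ y = 0 := by
  rw [← (posSemidef_sum_smul_vecMulVec_self w v fun k => (hw k).le).dotProduct_mulVec_zero_iff,
    star_trivial, dotProduct_sum_smul_vecMulVec_self_mulVec,
    Finset.sum_eq_zero_iff_of_nonneg fun k _ => mul_nonneg (hw k).le (sq_nonneg _)]
  simp [(hw _).ne']

end Matrix

namespace RadiationHydrodynamics

variable {L : ℕ}

/-- Indices are 0-based: `energy` is the paper's fifth component (after density and momentum),
and `intensity l` the paper's `(6 + l)`-th. -/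
def energy : Fin (L + 5) := ⟨4, by simp⟩

def intensity (l : Fin L) : Fin (L + 5) := ⟨5 + l, by simp [add_comm]⟩

@[simp] theorem energy_val : (energy : Fin (L + 5)).val = 4 := rfl

@[simp] theorem intensity_val (l : Fin L) : (intensity l).val = 5 + l.val := rfl

theorem intensity_injective : Function.Injective (intensity (L := L)) := fun l m h => by
  simpa [Fin.ext_iff] using h

theorem index_cases (i : Fin (L + 5)) : i.val ≤ 3 ∨ i = energy ∨ ∃ l, i = intensity l := by
  rcases Nat.lt_or_ge i.val 5 with hi | hi
  · rcases Nat.lt_or_ge i.val 4 with hi' | hi'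
    · exact Or.inl (by omega)
    · exact Or.inr (Or.inl (Fin.ext (by simp; omega)))
  · exact Or.inr (Or.inr ⟨⟨i.val - 5, by omega⟩, Fin.ext (by simp; omega)⟩)

noncomputable def relaxationMatrix (ρ C : ℝ) (σ : Fin L → ℝ) (σ' : ℕ → ℝ) :
    Matrix (Fin (L + 5)) (Fin (L + 5)) ℝ :=
  Matrix.of fun i j : Fin (L + 5) =>
    if i.val ≤ 3 ∨ j.val ≤ 3 then 0
    else if i.val = 4 ∧ j.val = 4 then ρ * C * ∑ l, σ l
    else if i.val = 4 then -(ρ * σ' (j.val - 5))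
    else if j.val = 4 then -(ρ * σ' (i.val - 5))
    else if i = j then ρ * C⁻¹ * σ' (i.val - 5)
    else 0

def couplingVec (C : ℝ) (l : Fin L) : Fin (L + 5) → ℝ :=
  C • Pi.single energy 1 - Pi.single (intensity l) 1

theorem couplingVec_apply_of_val_le_three (C : ℝ) (l : Fin L) {i : Fin (L + 5)}
    (hi : i.val ≤ 3) : couplingVec C l i = 0 := by
  have : i ≠ energy := fun h => by simp [h] at hi
  have : i ≠ intensity l := fun h => by simp [h] at hi; omega
  simp [couplingVec, *]

@[simp] theorem couplingVec_energy (C : ℝ) (l : Fin L) : couplingVec C l energy = C := by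
  have : (energy : Fin (L + 5)) ≠ intensity l := fun h => by simp [Fin.ext_iff] at h; omega
  simp [couplingVec, this]

@[simp] theorem couplingVec_intensity (C : ℝ) (l m : Fin L) :
    couplingVec C l (intensity m) = if m = l then -1 else 0 := by
  have : intensity m ≠ energy := fun h => by simp [Fin.ext_iff] at h; omega
  simp [couplingVec, Pi.single_apply, this, intensity_injective.eq_iff, apply_ite]

theorem couplingVec_dotProduct (C : ℝ) (l : Fin L) (y : Fin (L + 5) → ℝ) :
    couplingVec C l ⬝ᵥ y = C * y energy - y (intensity l) := by
  simp [couplingVec, sub_dotProduct]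

theorem relaxationMatrix_eq_sum_smul_vecMulVec (ρ : ℝ) {C : ℝ} (hC : C ≠ 0) (σ : Fin L → ℝ)
    {σ' : ℕ → ℝ} (hσ' : ∀ k : ℕ, σ' k = if hk : k < L then σ ⟨k, hk⟩ else 0) :
    relaxationMatrix ρ C σ σ' =
      ∑ l, (ρ * C⁻¹ * σ l) • vecMulVec (couplingVec C l) (couplingVec C l) := by
  have hσ'_val (l : Fin L) : σ' l = σ l := by simp [hσ']
  have h_le (n : ℕ) : ¬ 5 + n ≤ 3 := by omega
  have h_ne (n : ℕ) : 5 + n ≠ 4 := by omega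
  ext i j
  simp only [relaxationMatrix, of_apply, Matrix.sum_apply, Matrix.smul_apply, vecMulVec_apply,
    smul_eq_mul]
  rcases index_cases i with hi | rfl | ⟨m, rfl⟩
  · simp [hi, couplingVec_apply_of_val_le_three C _ hi]
  all_goals rcases index_cases j with hj | rfl | ⟨n, rfl⟩
  · simp [hj, couplingVec_apply_of_val_le_three C _ hj]
  · simp [Finset.mul_sum]
    exact Finset.sum_congr rfl fun l _ => by field_simp
  · simp [hσ'_val, h_le, h_ne]
    field_simp
  · simp [hj, couplingVec_apply_of_val_le_three C _ hj]
  · simp [hσ'_val, h_le, h_ne]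
    field_simp
  · simp [hσ'_val, h_le, h_ne, intensity_injective.eq_iff]
    split_ifs with h <;> simp [h]

/-- The paper's `e₅ + C Σ_l e_{5+l}`. -/
def equilibriumVec (C : ℝ) : Fin (L + 5) → ℝ :=
  fun j => if j.val = 4 then 1 else if 5 ≤ j.val then C else 0

theorem eq_of_forall_intensity_eq {C : ℝ} {y : Fin (L + 5) → ℝ}
    (hy : ∀ l, y (intensity l) = C * y energy) :
    y = y ⟨0, by simp⟩ • Pi.single ⟨0, by simp⟩ 1 + y ⟨1, by simp⟩ • Pi.single ⟨1, by simp⟩ 1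
      + y ⟨2, by simp⟩ • Pi.single ⟨2, by simp⟩ 1 + y ⟨3, by simp⟩ • Pi.single ⟨3, by simp⟩ 1
      + y energy • equilibriumVec C := by
  funext i
  rcases index_cases i with hi | rfl | ⟨m, rfl⟩
  · obtain ⟨k, hk⟩ := i
    simp only [Pi.add_apply, Pi.smul_apply, Pi.single_apply, Fin.mk.injEq, equilibriumVec]
    interval_cases k <;> simp
  · simp [equilibriumVec, Fin.ext_iff]
  · have h_ne : ∀ k ≤ 4, 5 + m.val ≠ k := by omega
    simp [equilibriumVec, Fin.ext_iff, hy, h_ne, mul_comm]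

theorem mem_span_iff_forall_intensity_eq (C : ℝ) (y : Fin (L + 5) → ℝ) :
    y ∈ Submodule.span ℝ
        ({Pi.single (⟨0, by simp⟩ : Fin (L + 5)) 1, Pi.single (⟨1, by simp⟩ : Fin (L + 5)) 1,
          Pi.single (⟨2, by simp⟩ : Fin (L + 5)) 1, Pi.single (⟨3, by simp⟩ : Fin (L + 5)) 1,
          equilibriumVec C} : Set (Fin (L + 5) → ℝ)) ↔
      ∀ l, y (intensity l) = C * y energy := by
  constructor
  · intro hy
    induction hy using Submodule.span_induction with
    | mem z hz =>
      have h_ne : ∀ (l : Fin L) (k : ℕ), k ≤ 4 → 5 + l.val ≠ k := by omega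
      rcases hz with rfl | rfl | rfl | rfl | rfl <;>
        simp [Fin.ext_iff, equilibriumVec, h_ne]
    | zero => simp
    | add a b _ _ ha hb => intro l; simp [ha l, hb l]; ring
    | smul r a _ ha => intro l; simp [ha l]; ring
  · intro hy
    rw [eq_of_forall_intensity_eq hy]
    refine add_mem (add_mem (add_mem (add_mem ?_ ?_) ?_) ?_) ?_ <;>
      exact Submodule.smul_mem _ _ (Submodule.subset_span (by simp))

end RadiationHydrodynamics

open RadiationHydrodynamics

/-- Section 6 (radiation hydrodynamics): the matrix `ℒ` of (5.3) is symmetric,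
positive semidefinite with the explicit quadratic form
`yᵀℒy = ρ C⁻¹ Σ_l σ_l (C y₅ - y_{5+l})²`, and its kernel is
`span{e₁, e₂, e₃, e₄, e₅ + C Σ_l e_{5+l}}`, independent of `ρ` and the `σ_l`. -/
theorem stmt13 {L : ℕ} (ρ C : ℝ) (hρ : 0 < ρ) (hC : 0 < C)
    (σ : Fin L → ℝ) (hσ : ∀ l, 0 < σ l)
    (σ' : ℕ → ℝ) (hσ' : ∀ k : ℕ, σ' k = if hk : k < L then σ ⟨k, hk⟩ else 0)
    (M : Matrix (Fin (L + 5)) (Fin (L + 5)) ℝ)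
    (hM : M = Matrix.of fun i j : Fin (L + 5) =>
      if i.val ≤ 3 ∨ j.val ≤ 3 then 0
      else if i.val = 4 ∧ j.val = 4 then ρ * C * ∑ l, σ l
      else if i.val = 4 then -(ρ * σ' (j.val - 5))
      else if j.val = 4 then -(ρ * σ' (i.val - 5))
      else if i = j then ρ * C⁻¹ * σ' (i.val - 5)
      else 0) :
    M.IsSymm ∧
    M.PosSemidef ∧
    (∀ y : Fin (L + 5) → ℝ,
      y ⬝ᵥ M.mulVec y =
        ρ * C⁻¹ * ∑ l : Fin L,
          σ l * (C * y ⟨4, by omega⟩ - y ⟨5 + l.val, by omega⟩) ^ 2) ∧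
    LinearMap.ker (Matrix.toLin' M) =
      Submodule.span ℝ
        ({Pi.single (⟨0, by omega⟩ : Fin (L + 5)) 1,
          Pi.single (⟨1, by omega⟩ : Fin (L + 5)) 1,
          Pi.single (⟨2, by omega⟩ : Fin (L + 5)) 1,
          Pi.single (⟨3, by omega⟩ : Fin (L + 5)) 1,
          (fun j : Fin (L + 5) => if j.val = 4 then 1 else if 5 ≤ j.val then C else 0)} :
          Set (Fin (L + 5) → ℝ)) := by
  have hw : ∀ l, 0 < ρ * C⁻¹ * σ l := fun l => by have := hσ l; positivity
  obtain rfl : M = ∑ l, (ρ * C⁻¹ * σ l) • vecMulVec (couplingVec C l) (couplingVec C l) :=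
    hM.trans (relaxationMatrix_eq_sum_smul_vecMulVec ρ hC.ne' σ hσ')
  refine ⟨isSymm_sum_smul_vecMulVec_self _ _,
    posSemidef_sum_smul_vecMulVec_self _ _ fun l => (hw l).le, fun y => ?_, ?_⟩
  · rw [dotProduct_sum_smul_vecMulVec_self_mulVec, Finset.mul_sum]
    simp only [couplingVec_dotProduct, mul_assoc]
    rfl
  · ext y
    rw [LinearMap.mem_ker, toLin'_apply, sum_smul_vecMulVec_self_mulVec_eq_zero_iff _ _ hw]
    refine (forall_congr' fun l => ?_).trans (mem_span_iff_forall_intensity_eq C y).symm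
    rw [couplingVec_dotProduct, sub_eq_zero, eq_comm]
end

section
/- Let n be a positive integer, let A : Fin n × Fin n × Fin n × Fin n → ℝ (written A_{ij}^{kl}) be nonnegative and satisfy A_{ij}^{kl} = A_{kl}^{ij} and A_{kl}^{ij} = A_{lk}^{ij} for all i, j, k, l, and let f ∈ ℝⁿ with all f_k > 0. Define b_{ij}^{kl} = ∫₀¹ exp(σ·(log f_i + log f_j − log f_k − log f_l) + log f_k + log f_l) dσ > 0, Q_k = Σ_{i,j,l} (A_{ij}^{kl}·f_i·f_j − A_{kl}^{ij}·f_k·f_l), and a_{km} = −Σ_{j,l} A_{mj}^{kl}·b_{mj}^{kl} − Σ_{i,l} A_{im}^{kl}·b_{im}^{kl} + Σ_{i,j} A_{ij}^{km}·b_{ij}^{km} + δ_{km}·Σ_{i,j,l} A_{ij}^{kl}·b_{ij}^{kl}, where δ_{km} is the Kronecker delta. Then: (a) Q_k = −Σ_{m} a_{km}·log f_m for every k, i.e. Q(U) = −L(U)·∇η(U) for η(U) = Σ_k f_k·(log f_k − 1) and L(U) = [a_{km}]; (b) the matrix [a_{km}] is symmetric; (c) for every y ∈ ℝⁿ, yᵀ·[a_{km}]·y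 = (1/4)·Σ_{i,j,k,l} A_{ij}^{kl}·b_{ij}^{kl}·(y_i + y_j − y_k − y_l)² ≥ 0; (d) the kernel of [a_{km}] equals {y ∈ ℝⁿ : A_{ij}^{kl}·(y_i + y_j − y_k − y_l) = 0 for all i, j, k, l}, which is independent of f. -/
/-!
Write `W = A·b`. Since `b_{ij}^{kl}` is the divided difference `(e^x - e^y)/(x - y)` of `exp` at
`x = log (f_i f_j)`, `y = log (f_k f_l)`, it is positive and symmetric in `x, y`, so `W` inherits
the symmetries of `A`, and applying `L` to `log f` recovers `f_i f_j - f_k f_l`, which is (a).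
For any weight with these symmetries, relabelling the summation indices (`i ↔ j`, `k ↔ l`,
`(i, j) ↔ (k, l)`) gives (b) and turns `yᵀ L y` into the average of the weighted squares
`W (y_i + y_j - y_k - y_l)²`, which gives (c); `L y = 0` forces every such term to vanish,
which is (d).
-/

open Matrix Finset Real

/-- `∫₀¹ e^{σ x + (1 - σ) y} dσ`, which is `(e^x - e^y) / (x - y)` off the diagonal and `e^x`
on it. -/
noncomputable def expDividedDiff (x y : ℝ) : ℝ :=
  ∫ σ in (0:ℝ)..1, exp (σ * (x - y) + y)

theorem expDividedDiff_pos (x y : ℝ) : 0 < expDividedDiff x y := by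
  have hcont : Continuous fun σ : ℝ => exp (σ * (x - y) + y) := by fun_prop
  exact intervalIntegral.intervalIntegral_pos_of_pos (hcont.intervalIntegrable 0 1)
    (fun _ => exp_pos _) zero_lt_one

theorem expDividedDiff_comm (x y : ℝ) : expDividedDiff x y = expDividedDiff y x := by
  have h := intervalIntegral.integral_comp_sub_left (fun σ => exp (σ * (x - y) + y))
    (a := 0) (b := 1) 1
  rw [sub_self, sub_zero] at h
  rw [expDividedDiff, expDividedDiff, ← h]
  congr 1 with σ
  ring_nf

theorem expDividedDiff_mul_sub (x y : ℝ) : expDividedDiff x y * (x - y) = exp x - exp y := by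
  have hderiv (σ : ℝ) : HasDerivAt (fun σ => exp (σ * (x - y) + y))
      (exp (σ * (x - y) + y) * (x - y)) σ := by
    simpa using ((hasDerivAt_mul_const (x - y)).add_const y).exp
  have hcont : Continuous fun σ : ℝ => exp (σ * (x - y) + y) * (x - y) := by fun_prop
  rw [expDividedDiff, ← intervalIntegral.integral_mul_const,
    intervalIntegral.integral_eq_sub_of_hasDerivAt (fun σ _ => hderiv σ)
      (hcont.intervalIntegrable 0 1)]
  simp

theorem expDividedDiff_log_add_mul {p q r s : ℝ} (hp : 0 < p) (hq : 0 < q) (hr : 0 < r)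
    (hs : 0 < s) :
    expDividedDiff (log p + log q) (log r + log s) * (log p + log q - log r - log s)
      = p * q - r * s := by
  rw [sub_sub, expDividedDiff_mul_sub, exp_add, exp_add, exp_log hp, exp_log hq, exp_log hr,
    exp_log hs]

theorem sum_comm_pairs {ι β : Type*} [Fintype ι] [AddCommMonoid β] (F : ι → ι → ι → ι → β) :
    ∑ i, ∑ j, ∑ k, ∑ l, F i j k l = ∑ i, ∑ j, ∑ k, ∑ l, F k l i j :=
  calc ∑ i, ∑ j, ∑ k, ∑ l, F i j k l = ∑ i, ∑ k, ∑ j, ∑ l, F i j k l :=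
        sum_congr rfl fun _ _ => sum_comm
    _ = ∑ i, ∑ k, ∑ l, ∑ j, F i j k l :=
        sum_congr rfl fun _ _ => sum_congr rfl fun _ _ => sum_comm
    _ = ∑ k, ∑ i, ∑ l, ∑ j, F i j k l := sum_comm
    _ = ∑ k, ∑ l, ∑ i, ∑ j, F i j k l := sum_congr rfl fun _ _ => sum_comm

theorem apply_comm_upper {ι : Type*} {W : ι → ι → ι → ι → ℝ}
    (hpair : ∀ i j k l, W i j k l = W k l i j) (hswap : ∀ i j k l, W i j k l = W j i k l)
    (i j k l : ι) : W i j k l = W i j l k :=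
  (hpair i j k l).trans ((hswap k l i j).trans (hpair l k i j))

theorem sum4_eq_zero_iff_of_nonneg {ι : Type*} [Fintype ι] {F : ι → ι → ι → ι → ℝ}
    (hF : ∀ i j k l, 0 ≤ F i j k l) :
    ∑ i, ∑ j, ∑ k, ∑ l, F i j k l = 0 ↔ ∀ i j k l, F i j k l = 0 := by
  have h3 (i j k : ι) : 0 ≤ ∑ l, F i j k l := sum_nonneg fun l _ => hF i j k l
  have h2 (i j : ι) : 0 ≤ ∑ k, ∑ l, F i j k l := sum_nonneg fun k _ => h3 i j k
  have h1 (i : ι) : 0 ≤ ∑ j, ∑ k, ∑ l, F i j k l := sum_nonneg fun j _ => h2 i j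
  simp only [sum_eq_zero_iff_of_nonneg, mem_univ, true_implies, implies_true, h1, h2, h3, hF]

section Collision

variable {ι : Type*} [Fintype ι]

def collisionMatrix [DecidableEq ι] (W : ι → ι → ι → ι → ℝ) : Matrix ι ι ℝ :=
  Matrix.of fun k m =>
    -(∑ j, ∑ l, W m j k l) - (∑ i, ∑ l, W i m k l) + (∑ i, ∑ j, W i j k m)
      + if k = m then ∑ i, ∑ j, ∑ l, W i j k l else 0

theorem collisionMatrix_mulVec_apply [DecidableEq ι] (W : ι → ι → ι → ι → ℝ) (v : ι → ℝ)
    (k : ι) :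
    (collisionMatrix W *ᵥ v) k = -∑ i, ∑ j, ∑ l, W i j k l * (v i + v j - v k - v l) := by
  simp only [mulVec, dotProduct, collisionMatrix, of_apply, add_mul, sub_mul, neg_mul, ite_mul,
    zero_mul, sum_add_distrib, sum_sub_distrib, sum_neg_distrib, sum_ite_eq, mem_univ, if_true,
    sum_mul, mul_add, mul_sub]
  have hsecond : ∑ m, ∑ i, ∑ l, W i m k l * v m = ∑ i, ∑ j, ∑ l, W i j k l * v j := sum_comm
  have hfourth : ∑ m, ∑ i, ∑ j, W i j k m * v m = ∑ i, ∑ j, ∑ l, W i j k l * v l := by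
    rw [sum_comm]
    exact sum_congr rfl fun _ _ => sum_comm
  rw [hsecond, hfourth]
  ring

theorem sum_mul_upper_eq_neg_sum_mul_lower {W : ι → ι → ι → ι → ℝ}
    (hpair : ∀ i j k l, W i j k l = W k l i j) (φ ψ : ι → ℝ) :
    ∑ i, ∑ j, ∑ k, ∑ l, W i j k l * φ k * (ψ i + ψ j - ψ k - ψ l)
      = -∑ i, ∑ j, ∑ k, ∑ l, W i j k l * φ i * (ψ i + ψ j - ψ k - ψ l) := by
  rw [sum_comm_pairs]
  simp only [← sum_neg_distrib]
  congr! 4 with i _ j _ k _ l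
  rw [hpair k l i j]
  ring

/-- The symmetrization identity (8.4). -/
theorem sum_symmetrize {W : ι → ι → ι → ι → ℝ} (hpair : ∀ i j k l, W i j k l = W k l i j)
    (hswap : ∀ i j k l, W i j k l = W j i k l) (φ ψ : ι → ℝ) :
    ∑ i, ∑ j, ∑ k, ∑ l, W i j k l * (φ i + φ j - φ k - φ l) * (ψ i + ψ j - ψ k - ψ l)
      = 4 * ∑ i, ∑ j, ∑ k, ∑ l, W i j k l * φ i * (ψ i + ψ j - ψ k - ψ l) := by
  have hlower : ∑ i, ∑ j, ∑ k, ∑ l, W i j k l * φ j * (ψ i + ψ j - ψ k - ψ l)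
      = ∑ i, ∑ j, ∑ k, ∑ l, W i j k l * φ i * (ψ i + ψ j - ψ k - ψ l) := by
    rw [sum_comm]
    congr! 4 with i _ j _ k _ l
    rw [hswap j i k l]
    ring
  have hupper : ∑ i, ∑ j, ∑ k, ∑ l, W i j k l * φ l * (ψ i + ψ j - ψ k - ψ l)
      = ∑ i, ∑ j, ∑ k, ∑ l, W i j k l * φ k * (ψ i + ψ j - ψ k - ψ l) := by
    congr! 2 with i _ j _
    rw [sum_comm]
    congr! 2 with k _ l _
    rw [apply_comm_upper hpair hswap i j l k]
    ring
  have hsplit : ∑ i, ∑ j, ∑ k, ∑ l,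
        W i j k l * (φ i + φ j - φ k - φ l) * (ψ i + ψ j - ψ k - ψ l)
      = ∑ i, ∑ j, ∑ k, ∑ l, (W i j k l * φ i * (ψ i + ψ j - ψ k - ψ l)
          + W i j k l * φ j * (ψ i + ψ j - ψ k - ψ l)
          - W i j k l * φ k * (ψ i + ψ j - ψ k - ψ l)
          - W i j k l * φ l * (ψ i + ψ j - ψ k - ψ l)) := by
    congr! 4 with i _ j _ k _ l
    ring
  rw [hsplit]
  simp only [sum_add_distrib, sum_sub_distrib]
  rw [hlower, hupper, sum_mul_upper_eq_neg_sum_mul_lower hpair]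
  ring

variable [DecidableEq ι]

theorem collisionMatrix_isSymm {W : ι → ι → ι → ι → ℝ}
    (hpair : ∀ i j k l, W i j k l = W k l i j) (hswap : ∀ i j k l, W i j k l = W j i k l) :
    (collisionMatrix W).IsSymm := by
  refine Matrix.IsSymm.ext fun k m => ?_
  have hgain : ∑ j, ∑ l, W k j m l = ∑ j, ∑ l, W m j k l := by
    rw [sum_comm]
    congr! 2 with j _ l _
    exact hpair k l m j
  have hloss : ∑ i, ∑ l, W i k m l = ∑ i, ∑ l, W i m k l := by
    rw [sum_comm]
    congr! 2 with i _ l _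
    rw [hpair, hswap, apply_comm_upper hpair hswap]
  have hdiag : ∑ i, ∑ j, W i j m k = ∑ i, ∑ j, W i j k m := by
    congr! 2 with i _ j _
    exact apply_comm_upper hpair hswap i j m k
  simp only [collisionMatrix, of_apply, hgain, hloss, hdiag]
  by_cases hkm : k = m
  · subst hkm; rfl
  · rw [if_neg hkm, if_neg (Ne.symm hkm)]

theorem dotProduct_collisionMatrix_mulVec {W : ι → ι → ι → ι → ℝ}
    (hpair : ∀ i j k l, W i j k l = W k l i j) (hswap : ∀ i j k l, W i j k l = W j i k l)
    (y : ι → ℝ) :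
    y ⬝ᵥ collisionMatrix W *ᵥ y
      = 1 / 4 * ∑ i, ∑ j, ∑ k, ∑ l, W i j k l * (y i + y j - y k - y l) ^ 2 :=
  calc y ⬝ᵥ collisionMatrix W *ᵥ y
      = -∑ k, ∑ i, ∑ j, ∑ l, W i j k l * y k * (y i + y j - y k - y l) := by
        simp only [dotProduct, collisionMatrix_mulVec_apply, mul_neg, mul_sum, sum_neg_distrib]
        congr! 5 with k _ i _ j _ l _
        ring
    _ = -∑ i, ∑ j, ∑ k, ∑ l, W i j k l * y k * (y i + y j - y k - y l) := by
        rw [sum_comm]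
        congr! 2 with i _
        exact sum_comm
    _ = 1 / 4 * ∑ i, ∑ j, ∑ k, ∑ l, W i j k l * (y i + y j - y k - y l) ^ 2 := by
        rw [sum_mul_upper_eq_neg_sum_mul_lower hpair, neg_neg]
        simp only [sq, ← mul_assoc]
        rw [sum_symmetrize hpair hswap]
        ring

theorem dotProduct_collisionMatrix_mulVec_nonneg {W : ι → ι → ι → ι → ℝ}
    (hnonneg : ∀ i j k l, 0 ≤ W i j k l) (hpair : ∀ i j k l, W i j k l = W k l i j)
    (hswap : ∀ i j k l, W i j k l = W j i k l) (y : ι → ℝ) :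
    0 ≤ y ⬝ᵥ collisionMatrix W *ᵥ y := by
  rw [dotProduct_collisionMatrix_mulVec hpair hswap]
  exact mul_nonneg (by norm_num) (sum_nonneg fun i _ => sum_nonneg fun j _ =>
    sum_nonneg fun k _ => sum_nonneg fun l _ => mul_nonneg (hnonneg i j k l) (sq_nonneg _))

theorem collisionMatrix_mulVec_eq_zero_iff {W : ι → ι → ι → ι → ℝ}
    (hnonneg : ∀ i j k l, 0 ≤ W i j k l) (hpair : ∀ i j k l, W i j k l = W k l i j)
    (hswap : ∀ i j k l, W i j k l = W j i k l) (y : ι → ℝ) :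
    collisionMatrix W *ᵥ y = 0 ↔ ∀ i j k l, W i j k l * (y i + y j - y k - y l) = 0 := by
  constructor
  · intro hy
    have hsum : ∑ i, ∑ j, ∑ k, ∑ l, W i j k l * (y i + y j - y k - y l) ^ 2 = 0 := by
      have h := dotProduct_collisionMatrix_mulVec hpair hswap y
      rw [hy, dotProduct_zero] at h
      linarith
    intro i j k l
    have hterm := (sum4_eq_zero_iff_of_nonneg fun i j k l =>
      mul_nonneg (hnonneg i j k l) (sq_nonneg (y i + y j - y k - y l))).1 hsum i j k l
    rcases mul_eq_zero.1 hterm with hW | hdefect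
    · rw [hW, zero_mul]
    · rw [pow_eq_zero_iff two_ne_zero |>.1 hdefect, mul_zero]
  · intro hy
    ext k
    simp [collisionMatrix_mulVec_apply, hy]

end Collision

noncomputable def collisionWeight {ι : Type*} (A : ι → ι → ι → ι → ℝ) (f : ι → ℝ)
    (i j k l : ι) : ℝ :=
  A i j k l * expDividedDiff (log (f i) + log (f j)) (log (f k) + log (f l))

section CollisionWeight

variable {ι : Type*} {A : ι → ι → ι → ι → ℝ}

theorem collisionWeight_nonneg (hA : ∀ i j k l, 0 ≤ A i j k l) (f : ι → ℝ) (i j k l : ι) :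
    0 ≤ collisionWeight A f i j k l :=
  mul_nonneg (hA i j k l) (expDividedDiff_pos _ _).le

theorem collisionWeight_comm_pairs (hpair : ∀ i j k l, A i j k l = A k l i j) (f : ι → ℝ)
    (i j k l : ι) : collisionWeight A f i j k l = collisionWeight A f k l i j := by
  rw [collisionWeight, collisionWeight, hpair, expDividedDiff_comm]

theorem collisionWeight_comm_lower (hswap : ∀ i j k l, A i j k l = A j i k l) (f : ι → ℝ)
    (i j k l : ι) : collisionWeight A f i j k l = collisionWeight A f j i k l := by
  rw [collisionWeight, collisionWeight, hswap, add_comm (log (f i))]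

theorem collisionWeight_mul_eq_zero_iff (f : ι → ℝ) {i j k l : ι} {x : ℝ} :
    collisionWeight A f i j k l * x = 0 ↔ A i j k l * x = 0 := by
  simp only [collisionWeight, mul_right_comm (A i j k l), mul_eq_zero,
    (expDividedDiff_pos _ _).ne', or_false]

/-- `Q = -L ∇η` with `∇η = log f`: the divided difference turns `log (f i f j) - log (f k f l)`
back into `f i * f j - f k * f l`. -/
theorem sum_collision_eq_neg_collisionMatrix_mulVec_log [Fintype ι] [DecidableEq ι]
    (hpair : ∀ i j k l, A i j k l = A k l i j) {f : ι → ℝ} (hf : ∀ k, 0 < f k) (k : ι) :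
    ∑ i, ∑ j, ∑ l, (A i j k l * f i * f j - A k l i j * f k * f l)
      = -(collisionMatrix (collisionWeight A f) *ᵥ fun m => log (f m)) k := by
  rw [collisionMatrix_mulVec_apply, neg_neg]
  congr! 3 with i _ j _ l _
  rw [collisionWeight, ← hpair i j k l, mul_assoc (A i j k l) (expDividedDiff _ _),
    expDividedDiff_log_add_mul (hf i) (hf j) (hf k) (hf l)]
  ring

end CollisionWeight

theorem stmt19_general {n : ℕ}
    (A : Fin n → Fin n → Fin n → Fin n → ℝ)
    (hApos : ∀ i j k l, 0 ≤ A i j k l)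
    (hA1 : ∀ i j k l, A i j k l = A k l i j)
    (hA2 : ∀ i j k l, A i j k l = A j i k l)
    (f : Fin n → ℝ) (hf : ∀ k, 0 < f k)
    (b : Fin n → Fin n → Fin n → Fin n → ℝ)
    (hb : ∀ i j k l, b i j k l = ∫ σ in (0:ℝ)..1,
      Real.exp (σ * (Real.log (f i) + Real.log (f j) - Real.log (f k) - Real.log (f l))
        + Real.log (f k) + Real.log (f l)))
    (Q : Fin n → ℝ)
    (hQ : ∀ k, Q k = ∑ i, ∑ j, ∑ l, (A i j k l * f i * f j - A k l i j * f k * f l))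
    (a : Fin n → Fin n → ℝ)
    (ha : ∀ k m, a k m =
      -(∑ j, ∑ l, A m j k l * b m j k l) - (∑ i, ∑ l, A i m k l * b i m k l)
      + (∑ i, ∑ j, A i j k m * b i j k m)
      + (if k = m then ∑ i, ∑ j, ∑ l, A i j k l * b i j k l else 0)) :
    (∀ i j k l, 0 < b i j k l) ∧
    (∀ k, Q k = -∑ m, a k m * Real.log (f m)) ∧
    (∀ k m, a k m = a m k) ∧
    (∀ y : Fin n → ℝ,
      y ⬝ᵥ (Matrix.of a).mulVec y =
        (1 / 4) * ∑ i, ∑ j, ∑ k, ∑ l,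
          A i j k l * b i j k l * (y i + y j - y k - y l) ^ 2 ∧
      0 ≤ y ⬝ᵥ (Matrix.of a).mulVec y) ∧
    (∀ y : Fin n → ℝ,
      (Matrix.of a).mulVec y = 0 ↔
        ∀ i j k l, A i j k l * (y i + y j - y k - y l) = 0) := by
  obtain rfl : b = fun i j k l =>
      expDividedDiff (log (f i) + log (f j)) (log (f k) + log (f l)) := by
    ext i j k l
    rw [hb, expDividedDiff]
    congr 1 with σ
    ring_nf
  have hM : Matrix.of a = collisionMatrix (collisionWeight A f) := by
    ext k m
    rw [of_apply, ha]
    rfl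
  have hpair := collisionWeight_comm_pairs hA1 f
  have hswap := collisionWeight_comm_lower hA2 f
  refine ⟨fun _ _ _ _ => expDividedDiff_pos _ _, fun k => ?_, fun k m => ?_,
    fun y => ⟨?_, ?_⟩, fun y => ?_⟩
  · rw [hQ, sum_collision_eq_neg_collisionMatrix_mulVec_log hA1 hf, ← hM]
    rfl
  · simpa only [← hM, of_apply] using (collisionMatrix_isSymm hpair hswap).apply m k
  · rw [hM]
    exact dotProduct_collisionMatrix_mulVec hpair hswap y
  · rw [hM]
    exact dotProduct_collisionMatrix_mulVec_nonneg (collisionWeight_nonneg hApos f) hpair hswap y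
  · rw [hM, collisionMatrix_mulVec_eq_zero_iff (collisionWeight_nonneg hApos f) hpair hswap]
    exact forall₄_congr fun i j k l => collisionWeight_mul_eq_zero_iff f

/-- Section 9 (discrete velocity models): verification of the three structural
properties, equations (8.5)–(8.6). Here `A i j k l` denotes `A_{ij}^{kl}`
(lower indices `i j`, upper indices `k l`), `b i j k l` denotes `b_{ij}^{kl}`,
and `a k m` the entries of the matrix `ℒ(U)`. -/
theorem stmt19 {n : ℕ} (hn : 0 < n)
    (A : Fin n → Fin n → Fin n → Fin n → ℝ)
    (hApos : ∀ i j k l, 0 ≤ A i j k l)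
    (hA1 : ∀ i j k l, A i j k l = A k l i j)
    (hA2 : ∀ i j k l, A i j k l = A j i k l)
    (f : Fin n → ℝ) (hf : ∀ k, 0 < f k)
    (b : Fin n → Fin n → Fin n → Fin n → ℝ)
    (hb : ∀ i j k l, b i j k l = ∫ σ in (0:ℝ)..1,
      Real.exp (σ * (Real.log (f i) + Real.log (f j) - Real.log (f k) - Real.log (f l))
        + Real.log (f k) + Real.log (f l)))
    (Q : Fin n → ℝ)
    (hQ : ∀ k, Q k = ∑ i, ∑ j, ∑ l, (A i j k l * f i * f j - A k l i j * f k * f l))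
    (a : Fin n → Fin n → ℝ)
    (ha : ∀ k m, a k m =
      -(∑ j, ∑ l, A m j k l * b m j k l) - (∑ i, ∑ l, A i m k l * b i m k l)
      + (∑ i, ∑ j, A i j k m * b i j k m)
      + (if k = m then ∑ i, ∑ j, ∑ l, A i j k l * b i j k l else 0)) :
    (∀ i j k l, 0 < b i j k l) ∧
    (∀ k, Q k = -∑ m, a k m * Real.log (f m)) ∧
    (∀ k m, a k m = a m k) ∧
    (∀ y : Fin n → ℝ,
      y ⬝ᵥ (Matrix.of a).mulVec y =
        (1 / 4) * ∑ i, ∑ j, ∑ k, ∑ l,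
          A i j k l * b i j k l * (y i + y j - y k - y l) ^ 2 ∧
      0 ≤ y ⬝ᵥ (Matrix.of a).mulVec y) ∧
    (∀ y : Fin n → ℝ,
      (Matrix.of a).mulVec y = 0 ↔
        ∀ i j k l, A i j k l * (y i + y j - y k - y l) = 0) :=
  stmt19_general A hApos hA1 hA2 f hf b hb Q hQ a ha
end
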